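/- Suppose V is of class C² (assumption (A3)). Then for every 0 < ε ≤ 1 and every solution (u, m) of Problem 1, the following integral identity holds: ∫₀¹ H''(u')·m·(u'')² dx + ∫₀¹ α·m^{α−1}·(m')² dx + ε ∫₀¹ ((m')² + (m'')² + (u')² + (u'')²) dx = −∫₀¹ V·m'' dx. -/

import Mathlib

open Set intervalIntegral

noncomputable section

/-- `f : ℝ → ℝ` is ½-Hölder continuous: there is `K ≥ 0` with
`|f x - f y| ≤ K * |x - y| ^ (1/2)` for all `x y`. -/
def IsHolderHalf (f : ℝ → ℝ) : Prop :=
  ∃ K : ℝ, 0 ≤ K ∧ ∀ x y : ℝ, |f x - f y| ≤ K * |x - y| ^ ((1 : ℝ) / 2)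

/-- `f` is a 1-periodic function of class `C²` (a `C²` function on the torus `𝕋`). -/
def MemC2T (f : ℝ → ℝ) : Prop :=
  Function.Periodic f 1 ∧ ContDiff ℝ 2 f

/-- `f ∈ C^{2,1/2}(𝕋)`: 1-periodic, of class `C²`, with ½-Hölder continuous
second derivative. -/
def MemC2HalfT (f : ℝ → ℝ) : Prop :=
  MemC2T f ∧ IsHolderHalf (deriv (deriv f))

/-- `(u, m)` is a solution of Problem 1 with Hamiltonian `H`, potential `V`,
exponent `α` and parameter `ε`: `u, m` are 1-periodic `C²` functions, `m > 0`
everywhere, and the system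
`u - u'' + H(u') + V = m^α + ε (m - m'')`,
`m - m'' - (H'(u') m)' = 1 - ε (u - u'')`
holds pointwise. -/
def SolvesMFG (H V : ℝ → ℝ) (α ε : ℝ) (u m : ℝ → ℝ) : Prop :=
  MemC2T u ∧ MemC2T m ∧ (∀ x, 0 < m x) ∧
  (∀ x : ℝ, u x - deriv (deriv u) x + H (deriv u x) + V x
      = m x ^ α + ε * (m x - deriv (deriv m) x)) ∧
  (∀ x : ℝ, m x - deriv (deriv m) x
      - deriv (fun y => deriv H (deriv u y) * m y) x
      = 1 - ε * (u x - deriv (deriv u) x))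

/-! Multiplying the first equation by `m''` and the second by `u''` and subtracting, the
integrand of the identity (with `V m''` moved to the left) becomes the exact derivative of
the flux `(m^α + ε m - u - H(u')) m' + (m + ε u - 1) u'`. The flux is 1-periodic, so its
derivative integrates to zero over a period. -/

theorem Function.Periodic.deriv {𝕜 F : Type*} [NontriviallyNormedField 𝕜] [NormedAddCommGroup F]
    [NormedSpace 𝕜 F] {f : 𝕜 → F} {c : 𝕜} (hf : Function.Periodic f c) :
    Function.Periodic (deriv f) c := fun x => by
  rw [← deriv_comp_add_const, hf.funext]

@[fun_prop]
theorem ContDiff.continuous_deriv_deriv {𝕜 F : Type*} [NontriviallyNormedField 𝕜]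
    [NormedAddCommGroup F] [NormedSpace 𝕜 F] {f : 𝕜 → F} (hf : ContDiff 𝕜 2 f) :
    Continuous (deriv (deriv f)) :=
  (hf.deriv' (n := 1)).continuous_deriv_one

theorem integral_eq_zero_of_hasDerivAt_of_periodic {E : Type*} [NormedAddCommGroup E]
    [NormedSpace ℝ E] [CompleteSpace E] {F f : ℝ → E} {a T : ℝ} (hF : Function.Periodic F T)
    (hderiv : ∀ x, HasDerivAt F (f x) x)
    (hint : IntervalIntegrable f MeasureTheory.volume a (a + T)) :
    ∫ x in a..a + T, f x = 0 := by
  rw [integral_eq_sub_of_hasDerivAt (fun x _ => hderiv x) hint, hF a, sub_self]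

def secondOrderFlux (H : ℝ → ℝ) (α ε : ℝ) (u m : ℝ → ℝ) (x : ℝ) : ℝ :=
  (m x ^ α + ε * m x - u x - H (deriv u x)) * deriv m x + (m x + ε * u x - 1) * deriv u x

theorem Function.Periodic.secondOrderFlux {H : ℝ → ℝ} {α ε c : ℝ} {u m : ℝ → ℝ}
    (hu : Function.Periodic u c) (hm : Function.Periodic m c) :
    Function.Periodic (secondOrderFlux H α ε u m) c := fun x => by
  simp only [_root_.secondOrderFlux, hu x, hm x, hu.deriv x, hm.deriv x]

section Flux

variable {H V : ℝ → ℝ} {α ε : ℝ} {u m : ℝ → ℝ}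

theorem hasDerivAt_secondOrderFlux {x : ℝ} (hH : Differentiable ℝ H) (hu : ContDiff ℝ 2 u)
    (hm : ContDiff ℝ 2 m) (hmx : m x ≠ 0) :
    HasDerivAt (secondOrderFlux H α ε u m)
      ((α * m x ^ (α - 1) * deriv m x + ε * deriv m x - deriv u x
          - deriv H (deriv u x) * deriv (deriv u) x) * deriv m x
        + (m x ^ α + ε * m x - u x - H (deriv u x)) * deriv (deriv m) x
        + (deriv m x + ε * deriv u x) * deriv u x
        + (m x + ε * u x - 1) * deriv (deriv u) x) x := by
  have hu' : HasDerivAt u (deriv u x) x := (hu.differentiable two_ne_zero x).hasDerivAt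
  have hm' : HasDerivAt m (deriv m x) x := (hm.differentiable two_ne_zero x).hasDerivAt
  have hu'' : HasDerivAt (deriv u) (deriv (deriv u) x) x :=
    (hu.differentiable_deriv_two x).hasDerivAt
  have hm'' : HasDerivAt (deriv m) (deriv (deriv m) x) x :=
    (hm.differentiable_deriv_two x).hasDerivAt
  have hmα := hm'.rpow_const (p := α) (Or.inl hmx)
  have hHu := (hH (deriv u x)).hasDerivAt.comp x hu''
  exact (((((hmα.add (hm'.const_mul ε)).sub hu').sub hHu).mul hm'').add
    (((hm'.add (hu'.const_mul ε)).sub_const 1).mul hu'')).congr_deriv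
    (by simp only [Pi.add_apply, Pi.sub_apply, Function.comp_apply]; ring)

theorem SolvesMFG.hasDerivAt_secondOrderFlux (hH : ContDiff ℝ 2 H)
    (hsol : SolvesMFG H V α ε u m) (x : ℝ) :
    HasDerivAt (secondOrderFlux H α ε u m)
      (deriv (deriv H) (deriv u x) * m x * deriv (deriv u) x ^ 2
        + α * m x ^ (α - 1) * deriv m x ^ 2
        + ε * (deriv m x ^ 2 + deriv (deriv m) x ^ 2 + deriv u x ^ 2 + deriv (deriv u) x ^ 2)
        + V x * deriv (deriv m) x) x := by
  obtain ⟨⟨-, hu⟩, ⟨-, hm⟩, hm_pos, hu_eq, hm_eq⟩ := hsol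
  have hdrift : HasDerivAt (fun y => deriv H (deriv u y) * m y)
      (deriv (deriv H) (deriv u x) * deriv (deriv u) x * m x
        + deriv H (deriv u x) * deriv m x) x :=
    (((hH.differentiable_deriv_two _).hasDerivAt.comp x
      (hu.differentiable_deriv_two x).hasDerivAt).mul
      (hm.differentiable two_ne_zero x).hasDerivAt)
  have hm_eq' := hm_eq x
  rw [hdrift.deriv] at hm_eq'
  refine (_root_.hasDerivAt_secondOrderFlux (hH.differentiable two_ne_zero) hu hm
    (hm_pos x).ne').congr_deriv ?_
  linear_combination -deriv (deriv m) x * hu_eq x + deriv (deriv u) x * hm_eq'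

end Flux

theorem second_order_identity_general
    (α : ℝ)
    (H V : ℝ → ℝ) (hH : ContDiff ℝ 2 H)
    (hA3 : ContDiff ℝ 2 V) :
    ∀ ε : ℝ, 0 < ε → ε ≤ 1 → ∀ u m : ℝ → ℝ, SolvesMFG H V α ε u m →
      (∫ x in (0:ℝ)..1,
          deriv (deriv H) (deriv u x) * m x * (deriv (deriv u) x) ^ 2)
        + (∫ x in (0:ℝ)..1, α * m x ^ (α - 1) * (deriv m x) ^ 2)
        + ε * (∫ x in (0:ℝ)..1,
            ((deriv m x) ^ 2 + (deriv (deriv m) x) ^ 2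
              + (deriv u x) ^ 2 + (deriv (deriv u) x) ^ 2))
      = -(∫ x in (0:ℝ)..1, V x * deriv (deriv m) x) := by
  intro ε _ _ u m hsol
  have ⟨⟨hu_per, hu⟩, ⟨hm_per, hm⟩, hm_pos, _⟩ := hsol
  have hu' := hu.continuous_deriv one_le_two
  have hm' := hm.continuous_deriv one_le_two
  have hu'' := hu.continuous_deriv_deriv
  have hm'' := hm.continuous_deriv_deriv
  have hH'' := hH.continuous_deriv_deriv
  have hV := hA3.continuous
  have hm₀ := hm.continuous
  have hmα := hm₀.rpow_const (p := α - 1) fun x => Or.inl (hm_pos x).ne'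
  have key := integral_eq_zero_of_hasDerivAt_of_periodic (a := 0)
    (hu_per.secondOrderFlux hm_per) (hsol.hasDerivAt_secondOrderFlux hH)
    (Continuous.intervalIntegrable (by fun_prop) _ _)
  rw [zero_add, integral_add, integral_add, integral_add, integral_const_mul] at key
  · linarith
  all_goals exact Continuous.intervalIntegrable (by fun_prop) _ _

/-- If `V` is 1-periodic and of class `C²`, then for every
`0 < ε ≤ 1` and every solution `(u, m)` of Problem 1, the integral identity
`∫₀¹ H''(u') m u''² + ∫₀¹ α m^{α-1} m'² + ε ∫₀¹ (m'² + m''² + u'² + u''²)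
  = -∫₀¹ V m''` holds. -/
theorem second_order_identity
    (α : ℝ) (hα : 0 < α)
    (H V : ℝ → ℝ) (hH : ContDiff ℝ 2 H)
    (hVper : Function.Periodic V 1) (hA3 : ContDiff ℝ 2 V) :
    ∀ ε : ℝ, 0 < ε → ε ≤ 1 → ∀ u m : ℝ → ℝ, SolvesMFG H V α ε u m →
      (∫ x in (0:ℝ)..1,
          deriv (deriv H) (deriv u x) * m x * (deriv (deriv u) x) ^ 2)
        + (∫ x in (0:ℝ)..1, α * m x ^ (α - 1) * (deriv m x) ^ 2)
        + ε * (∫ x in (0:ℝ)..1,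
            ((deriv m x) ^ 2 + (deriv (deriv m) x) ^ 2
              + (deriv u x) ^ 2 + (deriv (deriv u) x) ^ 2))
      = -(∫ x in (0:ℝ)..1, V x * deriv (deriv m) x) :=
  second_order_identity_general α H V hH hA3
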